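/- Let q be a prime power. For every field extension E of the rational function field 𝔽_q(t), the ring E ⊗_{𝔽_q(t)} 𝔽_q((t)) is reduced (has no nonzero nilpotent elements). In other words, the Laurent series field 𝔽_q((t)) is a separable field extension of 𝔽_q(t). -/

import Mathlib

open scoped RatFunc

/-! When `L` has an `F`-basis `bᵢ` whose `p`-th powers stay linearly independent, the Frobenius is
injective on `E ⊗[F] L` for every reduced `E`: expanding `x = ∑ eᵢ ⊗ bᵢ` gives
`x ^ p = ∑ eᵢ ^ p ⊗ bᵢ ^ p`, and the `1 ⊗ bᵢ ^ p` are `E`-linearly independent.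

For `F = K(t)` and `L = K((t))` with `K` perfect of characteristic `p`, every `c ∈ K(t)` is
`∑_{j<p} t^j d_j^p`, so a relation `∑ cᵢ fᵢ ^ p = 0` becomes `∑_{j<p} t^j g_j ^ p = 0` with
`g_j = ∑ᵢ d_{ij} fᵢ`. The nonzero summands have `t`-adic orders `j + p · ord g_j`, pairwise distinct
modulo `p`, so no cancellation can occur and all `g_j` vanish. -/

namespace HahnSeries

variable {Γ R ι : Type*} [LinearOrder Γ] [AddCommMonoid R]

theorem orderTop_add_eq_min {x y : R⟦Γ⟧} (h : x.orderTop ≠ y.orderTop) :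
    (x + y).orderTop = min x.orderTop y.orderTop := by
  rcases h.lt_or_gt with h | h
  · rw [orderTop_add_eq_left h, min_eq_left h.le]
  · rw [orderTop_add_eq_right h, min_eq_right h.le]

theorem orderTop_sum_of_injOn {s : Finset ι} {f : ι → R⟦Γ⟧}
    (hf : Set.InjOn (fun i ↦ (f i).orderTop) s) :
    (∑ i ∈ s, f i).orderTop = s.inf fun i ↦ (f i).orderTop := by
  classical
  induction s using Finset.induction_on with
  | empty => simp
  | insert a s ha ih =>
    rw [Finset.coe_insert] at hf
    rw [Finset.sum_insert ha, Finset.inf_insert]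
    rcases s.eq_empty_or_nonempty with rfl | hs
    · simp
    obtain ⟨b, hb, hmin⟩ := s.exists_mem_eq_inf hs fun i ↦ (f i).orderTop
    rw [← ih (hf.mono (Set.subset_insert a s))]
    refine orderTop_add_eq_min fun h ↦ ha ?_
    rw [ih (hf.mono (Set.subset_insert a s)), hmin] at h
    rw [hf (Set.mem_insert a s) (Set.mem_insert_of_mem a hb) h]
    exact hb

theorem eq_zero_of_sum_eq_zero_of_injOn_order [Zero Γ] {s : Finset ι} {f : ι → R⟦Γ⟧}
    (hf : Set.InjOn (fun i ↦ (f i).order) {i ∈ s | f i ≠ 0}) (hsum : ∑ i ∈ s, f i = 0) :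
    ∀ i ∈ s, f i = 0 := by
  classical
  by_contra! ⟨i, hi, hfi⟩
  have hinj : Set.InjOn (fun i ↦ (f i).orderTop) (s.filter (f · ≠ 0)) := by
    intro j hj k hk hjk
    simp only [Finset.coe_filter] at hj hk
    refine hf hj hk ?_
    simpa [← order_eq_orderTop_of_ne_zero hj.2, ← order_eq_orderTop_of_ne_zero hk.2] using hjk
  have htop := orderTop_sum_of_injOn hinj
  rw [Finset.sum_filter_ne_zero, hsum, orderTop_zero, eq_comm, Finset.inf_eq_top_iff] at htop
  exact hfi (orderTop_eq_top.mp (htop i (Finset.mem_filter.mpr ⟨hi, hfi⟩)))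

end HahnSeries

open Polynomial in
theorem Polynomial.exists_eq_sum_X_pow_mul_pow {R : Type*} [CommSemiring R] (p : ℕ) [ExpChar R p]
    [PerfectRing R p] (f : R[X]) : ∃ g : Fin p → R[X], f = ∑ j : Fin p, X ^ (j : ℕ) * g j ^ p := by
  have hp : 0 < p := expChar_pos R p
  induction f using Polynomial.induction_on' with
  | add f f' hf hf' =>
    obtain ⟨g, rfl⟩ := hf
    obtain ⟨g', rfl⟩ := hf'
    refine ⟨g + g', ?_⟩
    simp only [Pi.add_apply, add_pow_expChar, mul_add, Finset.sum_add_distrib]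
  | monomial n a =>
    refine ⟨Pi.single ⟨n % p, Nat.mod_lt n hp⟩ (C ((frobeniusEquiv R p).symm a) * X ^ (n / p)), ?_⟩
    rw [Fintype.sum_eq_single ⟨n % p, Nat.mod_lt n hp⟩ fun j hj ↦ by
      rw [Pi.single_eq_of_ne hj, zero_pow hp.ne', mul_zero]]
    rw [Pi.single_eq_same, mul_pow, ← C_pow, frobeniusEquiv_symm_pow_p, ← pow_mul,
      ← C_mul_X_pow_eq_monomial]
    nth_rewrite 1 [← Nat.mod_add_div n p]
    ring

open Polynomial in
theorem RatFunc.exists_eq_sum_X_pow_mul_pow {K : Type*} [Field K] (p : ℕ) [ExpChar K p]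
    [PerfectRing K p] (c : RatFunc K) :
    ∃ d : Fin p → RatFunc K, c = ∑ j : Fin p, X ^ (j : ℕ) * d j ^ p := by
  have hp : 0 < p := expChar_pos K p
  obtain ⟨g, hg⟩ := (c.num * c.denom ^ (p - 1)).exists_eq_sum_X_pow_mul_pow p
  refine ⟨fun j ↦ algebraMap K[X] (RatFunc K) (g j) / algebraMap K[X] (RatFunc K) c.denom, ?_⟩
  have hden : algebraMap K[X] (RatFunc K) c.denom ≠ 0 := by simp [c.denom_ne_zero]
  simp only [div_pow, ← mul_div_assoc, ← Finset.sum_div]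
  rw [eq_div_iff (pow_ne_zero p hden)]
  have hmap := congrArg (algebraMap K[X] (RatFunc K)) hg
  simp only [map_mul, map_pow, map_sum, RatFunc.algebraMap_X] at hmap
  have hpow : algebraMap K[X] (RatFunc K) c.denom ^ p =
      algebraMap K[X] (RatFunc K) c.denom * algebraMap K[X] (RatFunc K) c.denom ^ (p - 1) := by
    rw [← pow_succ', Nat.sub_add_cancel hp]
  rw [← hmap, hpow]
  nth_rewrite 1 [← c.num_div_denom]
  field_simp

namespace LaurentSeries

open HahnSeries

theorem eq_zero_of_sum_single_mul_pow_eq_zero {R : Type*} [Semiring R] [NoZeroDivisors R]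
    [Nontrivial R] {n : ℕ} (g : Fin n → R⸨X⸩)
    (h : ∑ j : Fin n, single (j : ℤ) (1 : R) * g j ^ n = 0) (j : Fin n) : g j = 0 := by
  set f : Fin n → R⸨X⸩ := fun k ↦ single (k : ℤ) 1 * g k ^ n with hf
  have hn : n ≠ 0 := (Fin.pos j).ne'
  have hne : ∀ k, f k ≠ 0 → g k ≠ 0 := by
    rintro k hk hgk
    simp [hf, hgk, zero_pow hn] at hk
  have hinj : Set.InjOn (fun k ↦ (f k).order) {k ∈ Finset.univ | f k ≠ 0} := by
    intro k hk l hl hkl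
    simp only [Finset.mem_univ, true_and, Set.mem_ofPred_eq] at hk hl
    simp only [hf, order_mul (single_ne_zero one_ne_zero) (pow_ne_zero _ (hne k hk)),
      order_mul (single_ne_zero one_ne_zero) (pow_ne_zero _ (hne l hl)), order_single one_ne_zero,
      order_pow, nsmul_eq_mul] at hkl
    have hmod := congrArg (· % (n : ℤ)) hkl
    simp only [Int.add_mul_emod_self_left] at hmod
    rw [Int.emod_eq_of_lt (by positivity) (by exact_mod_cast k.2),
      Int.emod_eq_of_lt (by positivity) (by exact_mod_cast l.2)] at hmod
    exact Fin.ext (by exact_mod_cast hmod)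
  by_contra hj
  exact mul_ne_zero (single_ne_zero one_ne_zero) (pow_ne_zero n hj)
    (eq_zero_of_sum_eq_zero_of_injOn_order hinj h j (Finset.mem_univ j))

theorem linearIndependent_pow {K : Type*} [Field K] (p : ℕ) [ExpChar K p] [PerfectRing K p]
    {ι : Type*} {f : ι → K⸨X⸩} (hf : LinearIndependent (RatFunc K) f) :
    LinearIndependent (RatFunc K) fun i ↦ f i ^ p := by
  have : ExpChar K⸨X⸩ p := expChar_of_injective_ringHom HahnSeries.C_injective p
  rw [linearIndependent_iff'] at hf ⊢
  intro s c hc i hi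
  choose d hd using fun i ↦ RatFunc.exists_eq_sum_X_pow_mul_pow p (c i)
  have hsum : ∑ j : Fin p, HahnSeries.single (j : ℤ) (1 : K) * (∑ i ∈ s, d i j • f i) ^ p = 0 := by
    rw [← hc]
    simp only [sum_pow_char, smul_pow, Finset.mul_sum]
    rw [Finset.sum_comm]
    refine Finset.sum_congr rfl fun i _ ↦ ?_
    rw [hd i, Finset.sum_smul]
    refine Finset.sum_congr rfl fun j _ ↦ ?_
    rw [mul_smul, Algebra.smul_def (RatFunc.X ^ (j : ℕ))]
    simp
  have hd0 : ∀ j, d i j = 0 := fun j ↦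
    hf s (fun i ↦ d i j) (eq_zero_of_sum_single_mul_pow_eq_zero _ hsum j) i hi
  simp [hd i, hd0, zero_pow (expChar_pos K p).ne']

end LaurentSeries

open TensorProduct

theorem isReduced_tensorProduct_of_linearIndependent_pow {F E L ι : Type*} [Field F] [CommRing E]
    [IsReduced E] [Algebra F E] [CommRing L] [Algebra F L] (p : ℕ) [Fact p.Prime] [CharP F p]
    (b : Module.Basis ι F L) (hb : LinearIndependent F fun i ↦ b i ^ p) :
    IsReduced (E ⊗[F] L) := by
  rcases subsingleton_or_nontrivial (E ⊗[F] L) with _ | _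
  · exact ⟨fun x _ ↦ Subsingleton.elim x 0⟩
  have : CharP (E ⊗[F] L) p := charP_of_injective_algebraMap' F p
  rw [isReduced_iff_pow_one_lt p (Fact.out : p.Prime).one_lt]
  intro x hx
  set B := b.baseChange E
  set c := B.repr x
  have hx_sum : x = ∑ i ∈ c.support, c i ⊗ₜ[F] b i := by
    conv_lhs => rw [← B.linearCombination_repr x]
    rw [Finsupp.linearCombination_apply, Finsupp.sum]
    refine Finset.sum_congr rfl fun i _ ↦ ?_
    rw [Module.Basis.baseChange_apply, TensorProduct.smul_tmul', smul_eq_mul, mul_one]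
  have hxp : ∑ i ∈ c.support, c i ^ p • ((1 : E) ⊗ₜ[F] (b i ^ p)) = 0 := by
    rw [← hx, hx_sum, sum_pow_char]
    refine Finset.sum_congr rfl fun i _ ↦ ?_
    rw [Algebra.TensorProduct.tmul_pow, TensorProduct.smul_tmul', smul_eq_mul, mul_one]
  have hli : LinearIndependent E fun i ↦ (1 : E) ⊗ₜ[F] (b i ^ p) :=
    Module.Flat.linearIndependent_one_tmul hb
  have hc : ∀ i ∈ c.support, c i = 0 := fun i hi ↦
    eq_zero_of_pow_eq_zero (linearIndependent_iff'.mp hli _ _ hxp i hi)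
  have hc0 : c = 0 := by
    ext i
    by_contra h
    exact h (hc i (Finsupp.mem_support_iff.mpr h))
  exact B.repr.map_eq_zero_iff.mp hc0

theorem stmt7_general
    {K : Type*} [Field K] [Fintype K]
    (E : Type*) [Field E] [Algebra (RatFunc K) E] :
    IsReduced (TensorProduct (RatFunc K) E (LaurentSeries K)) := by
  have : Fact (ringChar K).Prime := ⟨CharP.char_is_prime K (ringChar K)⟩
  let b := Module.Basis.ofVectorSpace (RatFunc K) (LaurentSeries K)
  exact isReduced_tensorProduct_of_linearIndependent_pow (ringChar K) b
    (LaurentSeries.linearIndependent_pow (ringChar K) b.linearIndependent)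

/-- **`𝔽_q((t))` is a separable field extension of `𝔽_q(t)`.**
Let `q` be a prime power and `K` the finite field with `q` elements.  For every field
extension `E` of the rational function field `K(t)`, the ring `E ⊗_{K(t)} K((t))` is
reduced. -/
theorem stmt7 (p : ℕ) [Fact p.Prime] (e : ℕ) (he : 1 ≤ e)
    {K : Type*} [Field K] [Fintype K] (hK : Fintype.card K = p ^ e)
    (E : Type*) [Field E] [Algebra (RatFunc K) E] :
    IsReduced (TensorProduct (RatFunc K) E (LaurentSeries K)) :=
  stmt7_general E
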